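/- In the described single-principal setting, for every j with 2 ≤ j ≤ q, the quantity k_{a_j} = inf_{w∈L_{a_j}} E_{o∼F_{a_j}}[w(o)] equals γ^{1−j} − 1 + ε/(1−γ), and this infimum is attained at w = (0, γ^{1−q} − γ^{j−q} + γ^{j−q}·ε/(1−γ)). -/

import Mathlib

/-- The data of a common agency setting: a finite set `A` of actions, a finite set `O` of
outcomes, `n` principals, a cost function `ψ`, outcome distributions `F a`, and valuation
domains `V ℓ`. -/
structure CAS where
  /-- the actions available to the agent -/
  A : Type
  [fintypeA : Fintype A]
  [nonemptyA : Nonempty A]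
  /-- the outcomes -/
  O : Type
  [fintypeO : Fintype O]
  [nonemptyO : Nonempty O]
  /-- the number of principals -/
  n : ℕ
  /-- the cost of each action -/
  ψ : A → ℝ
  /-- the outcome distribution induced by each action -/
  F : A → O → ℝ
  /-- the valuation domain of each principal -/
  V : Fin n → Set (O → ℝ)

attribute [instance] CAS.fintypeA CAS.nonemptyA CAS.fintypeO CAS.nonemptyO

namespace CAS

variable (S : CAS)

/-- Validity of a common agency setting: costs are nonnegative and some action has zero
cost, each `F a` is a probability distribution, and valuations are nonnegative. -/
def Valid : Prop :=
  (∀ a, 0 ≤ S.ψ a) ∧ (∃ a, S.ψ a = 0) ∧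
    (∀ a o, 0 ≤ S.F a o) ∧ (∀ a, ∑ o, S.F a o = 1) ∧
    (∀ ℓ, ∀ v ∈ S.V ℓ, ∀ o, 0 ≤ v o)

/-- A profile of one vector (valuation/bid) per principal. -/
abbrev Profile := Fin S.n → S.O → ℝ

/-- The profile `b` belongs to the product domain `V = V^1 × ⋯ × V^n`. -/
def InV (b : S.Profile) : Prop := ∀ ℓ, b ℓ ∈ S.V ℓ

/-- Expectation `E_{o ∼ F_a}[u(o)]`. -/
noncomputable def Exp (a : S.A) (u : S.O → ℝ) : ℝ := ∑ o, S.F a o * u o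

/-- Welfare `Wel^a(u) = Σ_ℓ E_{o ∼ F_a}[u^ℓ(o)] − ψ(a)`. -/
noncomputable def Wel (a : S.A) (u : S.Profile) : ℝ := (∑ ℓ, S.Exp a (u ℓ)) - S.ψ a

/-- A contract: a payment rule per principal, mapping a bid profile and an outcome
to a payment. -/
abbrev Contract := Fin S.n → S.Profile → S.O → ℝ

/-- The agent's expected utility from action `a` under contract `t` at bid profile `b`. -/
noncomputable def agentU (t : S.Contract) (b : S.Profile) (a : S.A) : ℝ :=
  (∑ ℓ, S.Exp a (t ℓ b)) - S.ψ a

/-- `x` is the agent's chosen action `x*`: it maximizes the agent's expected utility, and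
among utility-maximizing actions it maximizes the declared welfare. -/
def IsAgentChoice (t : S.Contract) (x : S.Profile → S.A) : Prop :=
  ∀ b, S.InV b →
    (∀ a, S.agentU t b a ≤ S.agentU t b (x b)) ∧
    (∀ a, S.agentU t b a = S.agentU t b (x b) → S.Wel a b ≤ S.Wel (x b) b)

/-- `astar` selects, for each profile `u`, an action `a*(u)` maximizing welfare. -/
def IsMaxSelection (astar : S.Profile → S.A) : Prop :=
  ∀ u a, S.Wel a u ≤ S.Wel (astar u) u

/-- The IIVCG conditions for contract `t` with agent choice `x`:
(1) for every `b ∈ V` the agent's chosen action maximizes declared welfare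
(`x*(b) = a*(b)`, so below `x b` plays the role of `a*(b)`); and
(2) there are functions `h^ℓ`, independent of `b^ℓ`, with
`E_{o∼F_{a*(b)}}[t^ℓ(b,o)] = h^ℓ(b^{−ℓ}) − Wel^{a*(b)}(b^{−ℓ},0)`. -/
def IsIIVCG (t : S.Contract) (x : S.Profile → S.A) : Prop :=
  (∀ b, S.InV b → ∀ a, S.Wel a b ≤ S.Wel (x b) b) ∧
  ∃ h : Fin S.n → S.Profile → ℝ,
    (∀ ℓ, ∀ b b' : S.Profile, (∀ k, k ≠ ℓ → b k = b' k) → h ℓ b = h ℓ b') ∧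
    (∀ b, S.InV b → ∀ ℓ, S.Exp (x b) (t ℓ b) =
      h ℓ b - S.Wel (x b) (Function.update b ℓ 0))

/-- Principal `ℓ`'s expected utility `E_{o∼F_{x*(b)}}[v(o) − t^ℓ(b,o)]` when her true
valuation is `v` and the bid profile is `b`. -/
noncomputable def prinU (t : S.Contract) (x : S.Profile → S.A) (ℓ : Fin S.n)
    (v : S.O → ℝ) (b : S.Profile) : ℝ :=
  S.Exp (x b) (fun o => v o - t ℓ b o)

/-- Truthfulness: reporting the true valuation maximizes each principal's expected
utility, no matter what the others bid. -/
def Truthful (t : S.Contract) (x : S.Profile → S.A) : Prop :=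
  ∀ ℓ, ∀ v ∈ S.V ℓ, ∀ b, S.InV b →
    S.prinU t x ℓ v b ≤ S.prinU t x ℓ v (Function.update b ℓ v)

/-- Individual rationality: a truthful principal gets nonnegative expected utility. -/
def IR (t : S.Contract) (x : S.Profile → S.A) : Prop :=
  ∀ ℓ, ∀ b, S.InV b → ∀ v ∈ S.V ℓ, 0 ≤ S.prinU t x ℓ v (Function.update b ℓ v)

/-- Limited liability: all payments to the agent are nonnegative. -/
def LL (t : S.Contract) : Prop :=
  ∀ ℓ, ∀ b, S.InV b → ∀ o, 0 ≤ t ℓ b o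

/-- `L_a`: the nonnegative payment vectors under which action `a` maximizes the agent's
expected utility. -/
def LSet (a : S.A) : Set (S.O → ℝ) :=
  { w | (∀ o, 0 ≤ w o) ∧ ∀ a', S.Exp a' w - S.ψ a' ≤ S.Exp a w - S.ψ a }

/-- `k_a = inf_{w ∈ L_a} E_{o∼F_a}[w(o)]`. -/
noncomputable def kval (a : S.A) : ℝ := sInf (S.Exp a '' S.LSet a)

/-- The maximal welfare `max_{a ∈ A} Wel^a(u)` at profile `u`. -/
noncomputable def maxWel (u : S.Profile) : ℝ :=
  Finset.univ.sup' Finset.univ_nonempty fun a => S.Wel a u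

/-- `m^ℓ(b) = inf_{ṽ ∈ V^ℓ} Wel^{a*(b^{−ℓ},ṽ)}(b^{−ℓ},ṽ) − Wel^{a*(b)}(b^{−ℓ},0)`,
where `x` plays the role of the welfare-maximizing selection `a*`. -/
noncomputable def mval (x : S.Profile → S.A) (ℓ : Fin S.n) (b : S.Profile) : ℝ :=
  sInf ((fun v => S.maxWel (Function.update b ℓ v)) '' S.V ℓ) -
    S.Wel (x b) (Function.update b ℓ 0)

end CAS

/-- The price-of-stability ("gap") example: `q ≥ 2` actions, two outcomes `o_1, o_2`
(indices `0, 1`), where action `a_i` (index `j = i − 1`) yields outcome `o_2` with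
probability `γ^{q−i}` and has cost `ψ(a_i) = γ^{1−i} − i + (i−1)(γ+ε)`, and a single
principal with valuation domain `{v : v(o_1) ≥ q, v(o_2) ≥ q}`. -/
noncomputable abbrev posSetting (q : ℕ) (hq : 2 ≤ q) (γ ε : ℝ) : CAS where
  A := Fin q
  nonemptyA := ⟨⟨0, by omega⟩⟩
  O := Fin 2
  n := 1
  ψ := fun j => γ⁻¹ ^ (j : ℕ) - ((j : ℕ) + 1) + (j : ℕ) * (γ + ε)
  F := fun j o =>
    if (o : ℕ) = 1 then γ ^ (q - 1 - (j : ℕ)) else 1 - γ ^ (q - 1 - (j : ℕ))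
  V := fun _ => { v | (q : ℝ) ≤ v 0 ∧ (q : ℝ) ≤ v 1 }

section helper
variable (q : ℕ) (hq : 2 ≤ q) (γ ε : ℝ)

lemma posExp (a : Fin q) (u : Fin 2 → ℝ) :
    (posSetting q hq γ ε).Exp a u
      = (1 - γ ^ (q - 1 - (a:ℕ))) * u 0 + γ ^ (q - 1 - (a:ℕ)) * u 1 := by
  simp [CAS.Exp, Fin.sum_univ_two]

lemma posPsi (a : Fin q) :
    (posSetting q hq γ ε).ψ a
      = γ⁻¹ ^ (a:ℕ) - ((a:ℕ) + 1) + (a:ℕ) * (γ + ε) := rfl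

end helper
set_option maxHeartbeats 1000000 in
/-- In the setting above, for every action `a_i` with `2 ≤ i ≤ q`
(index `j = i − 1` with `1 ≤ j`), the quantity `k_{a_i} = inf_{w ∈ L_{a_i}} E_{F_{a_i}}[w]`
equals `γ^{1−i} − 1 + ε/(1−γ)`, and the infimum is attained at
`w = (0, γ^{1−q} − γ^{i−q} + γ^{i−q}·ε/(1−γ))`. -/
theorem k_value_in_PoS_setting (q : ℕ) (hq : 2 ≤ q) (γ ε : ℝ)
    (hγ0 : 0 < γ) (hγ : γ < 1 / q) (hε0 : 0 < ε) (hε : ε ≤ 1 / q - γ)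
    (j : Fin q) (hj : 1 ≤ (j : ℕ))
    (w : Fin 2 → ℝ)
    (hw : w 0 = 0 ∧ w 1 = γ⁻¹ ^ (q - 1) - γ⁻¹ ^ (q - 1 - (j : ℕ)) +
      γ⁻¹ ^ (q - 1 - (j : ℕ)) * (ε / (1 - γ))) :
    (posSetting q hq γ ε).kval j = γ⁻¹ ^ (j : ℕ) - 1 + ε / (1 - γ) ∧
      w ∈ (posSetting q hq γ ε).LSet j ∧
      (posSetting q hq γ ε).Exp j w = (posSetting q hq γ ε).kval j := by
  obtain ⟨hw0, hw1⟩ := hw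
  have hjq : (j : ℕ) < q := j.isLt
  have hq2 : (2:ℝ) ≤ (q:ℝ) := by exact_mod_cast hq
  have hqpos : (0:ℝ) < q := by linarith
  have h1q : 1/(q:ℝ) ≤ 1/2 := by
    rw [div_le_div_iff₀ hqpos (by norm_num : (0:ℝ) < 2)]; linarith
  have hγhalf : γ < 1/2 := lt_of_lt_of_le hγ h1q
  have hγ1 : γ < 1 := by linarith
  have h1γ : (0:ℝ) < 1 - γ := by linarith
  have hγne : γ ≠ 0 := ne_of_gt hγ0
  have hinvpos : (0:ℝ) < γ⁻¹ := inv_pos.mpr hγ0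
  have hγγ : γ * γ⁻¹ = 1 := mul_inv_cancel₀ hγne
  have hinv2 : (2:ℝ) ≤ γ⁻¹ := by nlinarith [hγγ]
  have hd : (0:ℝ) < 1 - γ - ε := by
    have : γ + ε ≤ 1/(q:ℝ) := by linarith
    linarith
  have hD : (ε/(1-γ)) * (1-γ) = ε := div_mul_cancel₀ ε (ne_of_gt h1γ)
  have hDpos : 0 < ε/(1-γ) := div_pos hε0 h1γ
  have hD1 : ε/(1-γ) < 1 := (div_lt_one h1γ).mpr (by linarith)
  -- Bernoulli facts
  have bernA : ∀ m : ℕ, 1 - (m:ℝ)*(1-γ) ≤ γ^m := by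
    intro m
    have h := one_add_mul_le_pow (show (-2:ℝ) ≤ γ - 1 by linarith) m
    have : (1 + (γ-1))^m = γ^m := by ring_nf
    nlinarith [h]
  have bernB : ∀ m : ℕ, 1 + (m:ℝ)*(1-γ) ≤ γ⁻¹^m := by
    intro m
    have h := one_add_mul_le_pow (show (-2:ℝ) ≤ γ⁻¹ - 1 by linarith) m
    have hm : (0:ℝ) ≤ (m:ℝ) := Nat.cast_nonneg m
    have : (1 + (γ⁻¹-1))^m = γ⁻¹^m := by ring_nf
    nlinarith [h]
  -- pow identities
  have hpowmul : ∀ m : ℕ, γ^m * γ⁻¹^m = 1 := by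
    intro m; rw [← mul_pow, hγγ, one_pow]
  have hjexp : q - 1 - (j:ℕ) + (j:ℕ) = q - 1 := by omega
  have hts : γ^(q-1-(j:ℕ)) * γ⁻¹^(q-1) = γ⁻¹^(j:ℕ) := by
    have h2 : γ⁻¹^(q-1) = γ⁻¹^(q-1-(j:ℕ)) * γ⁻¹^(j:ℕ) := by rw [← pow_add, hjexp]
    rw [h2, ← mul_assoc, hpowmul, one_mul]
  have hExpK : γ^(q-1-(j:ℕ)) * w 1 = γ⁻¹^(j:ℕ) - 1 + ε/(1-γ) := by
    rw [hw1]
    linear_combination hts + (ε/(1-γ) - 1) * hpowmul (q-1-(j:ℕ))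
  -- membership
  have hmem : w ∈ (posSetting q hq γ ε).LSet j := by
    constructor
    · intro o
      fin_cases o
      · show (0:ℝ) ≤ w 0
        rw [hw0]
      · show (0:ℝ) ≤ w 1
        rw [hw1]
        have h1le : (1:ℝ) ≤ γ⁻¹ := by linarith
        have hle : γ⁻¹^(q-1-(j:ℕ)) ≤ γ⁻¹^(q-1) := pow_le_pow_right₀ h1le (by omega)
        have hp : (0:ℝ) < γ⁻¹^(q-1-(j:ℕ)) := pow_pos hinvpos _
        nlinarith [hp, hle, hDpos]
    · intro k
      rw [posExp, posExp, posPsi, posPsi, hw0]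
      rcases le_or_gt (k:ℕ) (j:ℕ) with hkj | hkj
      · -- k ≤ j, m = j - k
        obtain ⟨m, hcn⟩ : ∃ m : ℕ, (j:ℕ) = (k:ℕ) + m := ⟨(j:ℕ) - (k:ℕ), by omega⟩
        have hkq : (k:ℕ) < q := k.isLt
        have hcast : ((j:ℕ):ℝ) = ((k:ℕ):ℝ) + (m:ℝ) := by exact_mod_cast hcn
        have hek : γ^(q-1-(k:ℕ)) = γ^m * γ^(q-1-(j:ℕ)) := by
          rw [← pow_add, show m + (q-1-(j:ℕ)) = q-1-(k:ℕ) from by omega]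
        have hsk : γ⁻¹^(k:ℕ) = γ⁻¹^(j:ℕ) * γ^m := by
          have h1 : γ⁻¹^(j:ℕ) = γ⁻¹^(k:ℕ) * γ⁻¹^m := by
            rw [← pow_add, show (k:ℕ) + m = (j:ℕ) from hcn.symm]
          rw [h1, mul_assoc]
          rw [show γ⁻¹^m * γ^m = 1 from by rw [← mul_pow, inv_mul_cancel₀ hγne, one_pow], mul_one]
        have E1 : γ^(q-1-(k:ℕ)) * w 1 = γ^m * (γ⁻¹^(j:ℕ) - 1 + ε/(1-γ)) := by
          rw [hek, mul_assoc, hExpK]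
        have key : γ^m * (γ⁻¹^(j:ℕ) - 1 + ε/(1-γ)) -
            (γ⁻¹^(j:ℕ) * γ^m - (((k:ℕ):ℝ) + 1) + ((k:ℕ):ℝ)*(γ+ε)) ≤
            (γ⁻¹^(j:ℕ) - 1 + ε/(1-γ)) -
            (γ⁻¹^(j:ℕ) - (((k:ℕ):ℝ) + (m:ℝ) + 1) + (((k:ℕ):ℝ)+(m:ℝ))*(γ+ε)) := by
          have hb := bernA m
          have h1D : (0:ℝ) ≤ 1 - ε/(1-γ) := by linarith
          nlinarith [mul_nonneg (show (0:ℝ) ≤ (m:ℝ)*(1-γ) - (1 - γ^m) by linarith) h1D, hD]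
        calc (1 - γ^(q-1-(k:ℕ))) * 0 + γ^(q-1-(k:ℕ)) * w 1 -
              (γ⁻¹^(k:ℕ) - (((k:ℕ):ℝ) + 1) + ((k:ℕ):ℝ)*(γ+ε))
            = γ^m * (γ⁻¹^(j:ℕ) - 1 + ε/(1-γ)) -
              (γ⁻¹^(j:ℕ) * γ^m - (((k:ℕ):ℝ) + 1) + ((k:ℕ):ℝ)*(γ+ε)) := by
              rw [E1, hsk]; ring
          _ ≤ (γ⁻¹^(j:ℕ) - 1 + ε/(1-γ)) -
              (γ⁻¹^(j:ℕ) - (((k:ℕ):ℝ) + (m:ℝ) + 1) + (((k:ℕ):ℝ)+(m:ℝ))*(γ+ε)) := key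
          _ = (1 - γ^(q-1-(j:ℕ))) * 0 + γ^(q-1-(j:ℕ)) * w 1 -
              (γ⁻¹^(j:ℕ) - (((j:ℕ):ℝ) + 1) + ((j:ℕ):ℝ)*(γ+ε)) := by
              rw [hExpK, hcast]; ring
      · -- j < k, m = k - j
        obtain ⟨m, hcn⟩ : ∃ m : ℕ, (k:ℕ) = (j:ℕ) + m := ⟨(k:ℕ) - (j:ℕ), by omega⟩
        have hkq : (k:ℕ) < q := k.isLt
        have hcast : ((k:ℕ):ℝ) = ((j:ℕ):ℝ) + (m:ℝ) := by exact_mod_cast hcn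
        have hek : γ^(q-1-(k:ℕ)) = γ⁻¹^m * γ^(q-1-(j:ℕ)) := by
          have h1 : γ^(q-1-(j:ℕ)) = γ^m * γ^(q-1-(k:ℕ)) := by
            rw [← pow_add, show m + (q-1-(k:ℕ)) = q-1-(j:ℕ) from by omega]
          rw [h1, ← mul_assoc]
          rw [show γ⁻¹^m * γ^m = 1 from by rw [← mul_pow, inv_mul_cancel₀ hγne, one_pow], one_mul]
        have hsk : γ⁻¹^(k:ℕ) = γ⁻¹^(j:ℕ) * γ⁻¹^m := by
          rw [← pow_add, show (j:ℕ) + m = (k:ℕ) from hcn.symm]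
        have E1 : γ^(q-1-(k:ℕ)) * w 1 = γ⁻¹^m * (γ⁻¹^(j:ℕ) - 1 + ε/(1-γ)) := by
          rw [hek, mul_assoc, hExpK]
        have key : γ⁻¹^m * (γ⁻¹^(j:ℕ) - 1 + ε/(1-γ)) -
            (γ⁻¹^(j:ℕ) * γ⁻¹^m - (((j:ℕ):ℝ) + (m:ℝ) + 1) + (((j:ℕ):ℝ)+(m:ℝ))*(γ+ε)) ≤
            (γ⁻¹^(j:ℕ) - 1 + ε/(1-γ)) -
            (γ⁻¹^(j:ℕ) - (((j:ℕ):ℝ) + 1) + ((j:ℕ):ℝ)*(γ+ε)) := by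
          have hb := bernB m
          have h1D : (0:ℝ) ≤ 1 - ε/(1-γ) := by linarith
          nlinarith [mul_nonneg (show (0:ℝ) ≤ (γ⁻¹^m - 1) - (m:ℝ)*(1-γ) by linarith) h1D, hD]
        calc (1 - γ^(q-1-(k:ℕ))) * 0 + γ^(q-1-(k:ℕ)) * w 1 -
              (γ⁻¹^(k:ℕ) - (((k:ℕ):ℝ) + 1) + ((k:ℕ):ℝ)*(γ+ε))
            = γ⁻¹^m * (γ⁻¹^(j:ℕ) - 1 + ε/(1-γ)) -
              (γ⁻¹^(j:ℕ) * γ⁻¹^m - (((j:ℕ):ℝ) + (m:ℝ) + 1) + (((j:ℕ):ℝ)+(m:ℝ))*(γ+ε)) := by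
              rw [E1, hsk, hcast]; ring
          _ ≤ (γ⁻¹^(j:ℕ) - 1 + ε/(1-γ)) -
              (γ⁻¹^(j:ℕ) - (((j:ℕ):ℝ) + 1) + ((j:ℕ):ℝ)*(γ+ε)) := key
          _ = (1 - γ^(q-1-(j:ℕ))) * 0 + γ^(q-1-(j:ℕ)) * w 1 -
              (γ⁻¹^(j:ℕ) - (((j:ℕ):ℝ) + 1) + ((j:ℕ):ℝ)*(γ+ε)) := by
              rw [hExpK]; ring
  -- value of Exp at w
  have hexpw : (posSetting q hq γ ε).Exp j w = γ⁻¹^(j:ℕ) - 1 + ε/(1-γ) := by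
    rw [posExp, hw0, hExpK]; ring
  -- lower bound
  have hlb : ∀ z ∈ (posSetting q hq γ ε).Exp j '' (posSetting q hq γ ε).LSet j,
      γ⁻¹^(j:ℕ) - 1 + ε/(1-γ) ≤ z := by
    rintro z ⟨w', hw', rfl⟩
    obtain ⟨hpos, hcon⟩ := hw'
    set k0 : Fin q := ⟨(j:ℕ) - 1, by omega⟩ with hk0
    have hcon0 := hcon k0
    rw [posExp, posExp, posPsi, posPsi] at hcon0
    have hk0v : ((k0:ℕ):ℝ) = ((j:ℕ):ℝ) - 1 := by
      have : (k0:ℕ) = (j:ℕ) - 1 := rfl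
      rw [this]; push_cast [hj]; ring
    have hek : γ^(q-1-(k0:ℕ)) = γ^(q-1-(j:ℕ)) * γ := by
      rw [← pow_succ]; congr 1
      have : (k0:ℕ) = (j:ℕ) - 1 := rfl
      omega
    have hsk : γ⁻¹^((k0:ℕ)) = γ⁻¹^(j:ℕ) * γ := by
      have h1 : γ⁻¹^(j:ℕ) = γ⁻¹^((k0:ℕ)) * γ⁻¹ := by
        rw [← pow_succ]; congr 1
        have : (k0:ℕ) = (j:ℕ) - 1 := rfl
        omega
      rw [h1, mul_assoc, inv_mul_cancel₀ hγne, mul_one]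
    rw [hek, hsk, hk0v] at hcon0
    rw [posExp]
    set t := γ^(q-1-(j:ℕ)) with htdef
    have ht0 : 0 < t := pow_pos hγ0 _
    have ht1 : t ≤ 1 := pow_le_one₀ hγ0.le hγ1.le
    have hx : 0 ≤ w' 0 := hpos 0
    have h2 : (γ⁻¹^(j:ℕ) - 1 + ε/(1-γ)) ≤ t * (w' 1 - w' 0) := by
      rw [← mul_le_mul_iff_left₀ h1γ]
      nlinarith [hcon0, hD]
    nlinarith [h2, hx, ht1]
  have himg : γ⁻¹^(j:ℕ) - 1 + ε/(1-γ) ∈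
      (posSetting q hq γ ε).Exp j '' (posSetting q hq γ ε).LSet j :=
    ⟨w, hmem, hexpw⟩
  have hk : (posSetting q hq γ ε).kval j = γ⁻¹^(j:ℕ) - 1 + ε/(1-γ) := by
    refine le_antisymm (csInf_le ⟨_, fun z hz => hlb z hz⟩ himg) (le_csInf ⟨_, himg⟩ hlb)
  exact ⟨hk, hmem, by rw [hexpw, hk]⟩
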